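/- Under hypothesis (H1): for any subsets, if A - B ⊆ A then φ_{A,k} is B-monotone (y² - y¹ ∈ B implies φ_{A,k}(y¹) ≤ φ_{A,k}(y²) for y¹, y² in the domain). Conversely, if A - B ⊆ ℝk + A and φ_{A,k} is B-monotone, then A - B ⊆ A. -/

import Mathlib

open Set Pointwise

noncomputable def phiF {Y : Type*} [AddCommGroup Y] [Module ℝ Y] (A : Set Y) (k : Y) (y : Y) : EReal :=
  sInf ((fun t : ℝ => (t : EReal)) '' {t : ℝ | y - t • k ∈ A})

def recCone {Y : Type*} [AddCommGroup Y] [Module ℝ Y] (A : Set Y) : Set Y :=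
  {u | ∀ a ∈ A, ∀ t : ℝ, 0 ≤ t → a + t • u ∈ A}

def algInterior {Y : Type*} [AddCommGroup Y] [Module ℝ Y] (C : Set Y) : Set Y :=
  {x ∈ C | ∀ y : Y, ∃ ε : ℝ, 0 < ε ∧ ∀ t : ℝ, 0 ≤ t → t ≤ ε → x + t • y ∈ C}

/-! The forward implication only uses that the feasible sets `{t | y - t • k ∈ A}` grow under
translation of `y` by `B`. For the converse, the hypotheses on `A` make the feasible set of `y`
a closed up-set of `ℝ`, so `φ_{A,k}(y) ≤ t ↔ y - t • k ∈ A`; applied to `y = a - b` with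
`φ_{A,k}(a - b) ≤ φ_{A,k}(a) ≤ 0` this gives `a - b ∈ A`. -/

section phiF

variable {Y : Type*} [AddCommGroup Y] [Module ℝ Y] {A : Set Y} {k : Y}

theorem phiF_le_coe_of_sub_smul_mem {y : Y} {t : ℝ} (h : y - t • k ∈ A) : phiF A k y ≤ t :=
  sInf_le ⟨t, h, rfl⟩

theorem phiF_le_phiF_of_forall_sub_mem {B : Set Y} (hAB : ∀ a ∈ A, ∀ b ∈ B, a - b ∈ A)
    {y₁ y₂ : Y} (hy : y₂ - y₁ ∈ B) : phiF A k y₁ ≤ phiF A k y₂ := by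
  refine sInf_le_sInf (image_mono fun t ht => ?_)
  have h := hAB _ ht _ hy
  rwa [show y₂ - t • k - (y₂ - y₁) = y₁ - t • k by abel] at h

theorem sub_smul_mem_of_le (hrec : ∀ a ∈ A, ∀ t : ℝ, 0 ≤ t → a - t • k ∈ A) {y : Y} {s t : ℝ}
    (hs : y - s • k ∈ A) (hst : s ≤ t) : y - t • k ∈ A := by
  have h := hrec _ hs (t - s) (sub_nonneg.mpr hst)
  rwa [show y - s • k - (t - s) • k = y - t • k by rw [sub_smul]; abel] at h

theorem phiF_le_coe_iff [TopologicalSpace Y] [IsTopologicalAddGroup Y] [ContinuousSMul ℝ Y]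
    (hAc : IsClosed A) (hrec : ∀ a ∈ A, ∀ t : ℝ, 0 ≤ t → a - t • k ∈ A) {y : Y} {t : ℝ} :
    phiF A k y ≤ t ↔ y - t • k ∈ A := by
  refine ⟨fun hφ => ?_, phiF_le_coe_of_sub_smul_mem⟩
  by_contra ht
  set S : Set ℝ := {s | y - s • k ∈ A}
  have hlower : ∀ s ∈ S, t < s := fun s hs =>
    lt_of_not_ge fun hst => ht (sub_smul_mem_of_le hrec hs hst)
  rcases S.eq_empty_or_nonempty with hS | hS
  · simp [phiF, S, hS] at hφ
  have hbdd : BddBelow S := ⟨t, fun s hs => (hlower s hs).le⟩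
  have hSc : IsClosed S := hAc.preimage (by fun_prop)
  have hinf_le : ((sInf S : ℝ) : EReal) ≤ phiF A k y := by
    refine le_sInf ?_
    rintro _ ⟨s, hs, rfl⟩
    exact EReal.coe_le_coe_iff.mpr (csInf_le hbdd hs)
  have : sInf S ≤ t := by exact_mod_cast hinf_le.trans hφ
  exact (hlower _ (hSc.csInf_mem hS hbdd)).not_ge this

end phiF

theorem stmt_10_general {Y : Type*} [AddCommGroup Y] [Module ℝ Y] [TopologicalSpace Y]
    [IsTopologicalAddGroup Y] [ContinuousSMul ℝ Y]
    (A : Set Y) (hAc : IsClosed A)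
    (k : Y) (hrec : ∀ a ∈ A, ∀ t : ℝ, 0 ≤ t → a - t • k ∈ A)
    (B : Set Y) :
    ((∀ a ∈ A, ∀ b ∈ B, a - b ∈ A) →
      ∀ y₁ ∈ {y | ∃ t : ℝ, y - t • k ∈ A}, ∀ y₂ ∈ {y | ∃ t : ℝ, y - t • k ∈ A},
        y₂ - y₁ ∈ B → phiF A k y₁ ≤ phiF A k y₂) ∧
    ((∀ a ∈ A, ∀ b ∈ B, ∃ t : ℝ, (a - b) - t • k ∈ A) →
      (∀ y₁ ∈ {y | ∃ t : ℝ, y - t • k ∈ A}, ∀ y₂ ∈ {y | ∃ t : ℝ, y - t • k ∈ A},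
        y₂ - y₁ ∈ B → phiF A k y₁ ≤ phiF A k y₂) →
      ∀ a ∈ A, ∀ b ∈ B, a - b ∈ A) := by
  refine ⟨fun hAB _ _ _ _ hy => phiF_le_phiF_of_forall_sub_mem hAB hy, fun hABk hmono a ha b hb => ?_⟩
  have ha' : a - (0 : ℝ) • k ∈ A := by rwa [zero_smul, sub_zero]
  have hφ : phiF A k (a - b) ≤ phiF A k a :=
    hmono _ (hABk a ha b hb) _ ⟨0, ha'⟩ (by rwa [sub_sub_cancel])
  have h := (phiF_le_coe_iff hAc hrec).mp (hφ.trans (phiF_le_coe_of_sub_smul_mem ha'))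
  rwa [zero_smul, sub_zero] at h

theorem stmt_10 {Y : Type*} [AddCommGroup Y] [Module ℝ Y] [TopologicalSpace Y]
    [IsTopologicalAddGroup Y] [ContinuousSMul ℝ Y]
    (A : Set Y) (hAc : IsClosed A) (hAne : A.Nonempty) (hAp : A ≠ Set.univ)
    (k : Y) (hk : k ≠ 0) (hrec : ∀ a ∈ A, ∀ t : ℝ, 0 ≤ t → a - t • k ∈ A)
    (B : Set Y) :
    ((∀ a ∈ A, ∀ b ∈ B, a - b ∈ A) →
      ∀ y₁ ∈ {y | ∃ t : ℝ, y - t • k ∈ A}, ∀ y₂ ∈ {y | ∃ t : ℝ, y - t • k ∈ A},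
        y₂ - y₁ ∈ B → phiF A k y₁ ≤ phiF A k y₂) ∧
    ((∀ a ∈ A, ∀ b ∈ B, ∃ t : ℝ, (a - b) - t • k ∈ A) →
      (∀ y₁ ∈ {y | ∃ t : ℝ, y - t • k ∈ A}, ∀ y₂ ∈ {y | ∃ t : ℝ, y - t • k ∈ A},
        y₂ - y₁ ∈ B → phiF A k y₁ ≤ phiF A k y₂) →
      ∀ a ∈ A, ∀ b ∈ B, a - b ∈ A) :=
  stmt_10_general A hAc k hrec B
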